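/- arXiv:1401.5731 — 4 statements merged into one kernel-verified Lean document; each statement's English description precedes it below -/
import Mathlib

section
/- Characterization of attainable apparent profiles: for any deferral rate φ ∈ [0,1), an n-tuple t is of the form t = q − s + r for some feasible pair (s,r) if and only if t_i ≥ 0 for all i, Σ_i t_i = 1, and TV(t‖q) ≤ φ, where TV(t‖q) = ½ Σ_i |t_i − q_i|. -/
/-!
STATEMENT 1. Characterization of attainable apparent profiles: for any deferral
rate `φ ∈ [0,1)`, a tuple `t` equals `q - s + r` for some feasible pair `(s,r)`
iff `t` is nonnegative, sums to `1`, and `TV(t‖q) ≤ φ`.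
-/

/-- A pair `(s,r)` is feasible for actual profile `q` and deferral rate `φ`. -/
def Feasible {n : ℕ} (q : Fin n → ℝ) (φ : ℝ) (s r : Fin n → ℝ) : Prop :=
  (∀ i, 0 ≤ s i) ∧ (∀ i, 0 ≤ r i) ∧ (∀ i, 0 ≤ q i - s i + r i) ∧
    (∑ i, s i = φ) ∧ (∑ i, r i = φ)

/-- Total variation distance `TV(p‖q) = ½ ∑ |pᵢ - qᵢ|`. -/
noncomputable def tvDist {n : ℕ} (p q : Fin n → ℝ) : ℝ :=
  (1 / 2) * ∑ i, |p i - q i|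

theorem attainable_iff_tvDist_le {n : ℕ} (hn : 2 ≤ n)
    (q : Fin n → ℝ) (hq0 : ∀ i, 0 ≤ q i) (hq1 : ∑ i, q i = 1)
    (φ : ℝ) (hφ0 : 0 ≤ φ) (hφ1 : φ < 1) (t : Fin n → ℝ) :
    (∃ s r, Feasible q φ s r ∧ t = fun i => q i - s i + r i) ↔
      (∀ i, 0 ≤ t i) ∧ (∑ i, t i = 1) ∧ tvDist t q ≤ φ := by
  constructor
  · rintro ⟨s, r, ⟨hs, hr, hqsr, hssum, hrsum⟩, rfl⟩
    refine ⟨hqsr, ?_, ?_⟩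
    · have : ∑ i, (q i - s i + r i) = (∑ i, q i) - (∑ i, s i) + ∑ i, r i := by
        rw [Finset.sum_add_distrib, Finset.sum_sub_distrib]
      rw [this, hq1, hssum, hrsum]; ring
    · unfold tvDist
      have hb : ∀ i ∈ Finset.univ, |q i - s i + r i - q i| ≤ s i + r i := by
        intro i _
        have h1 : q i - s i + r i - q i = r i - s i := by ring
        rw [h1]
        calc |r i - s i| ≤ |r i| + |s i| := abs_sub _ _
          _ = s i + r i := by rw [abs_of_nonneg (hr i), abs_of_nonneg (hs i)]; ring
      have := Finset.sum_le_sum hb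
      rw [Finset.sum_add_distrib, hssum, hrsum] at this
      linarith
  · rintro ⟨ht0, ht1, htv⟩
    set T := tvDist t q with hT
    have hTnn : 0 ≤ T := by
      unfold tvDist at hT
      have : (0:ℝ) ≤ ∑ i, |t i - q i| :=
        Finset.sum_nonneg fun i _ => abs_nonneg _
      rw [hT]; linarith
    set δ := φ - T with hδ
    have hδnn : 0 ≤ δ := by rw [hδ]; linarith
    refine ⟨fun i => δ * q i + max (q i - t i) 0,
            fun i => δ * q i + max (t i - q i) 0, ⟨?_, ?_, ?_, ?_, ?_⟩, ?_⟩
    · intro i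
      have h1 := le_max_right (q i - t i) 0
      have h2 := mul_nonneg hδnn (hq0 i)
      show 0 ≤ δ * q i + max (q i - t i) 0
      linarith
    · intro i
      have h1 := le_max_right (t i - q i) 0
      have h2 := mul_nonneg hδnn (hq0 i)
      show 0 ≤ δ * q i + max (t i - q i) 0
      linarith
    · intro i
      have hkey : max (t i - q i) 0 - max (q i - t i) 0 = t i - q i := by
        rcases le_or_gt (t i) (q i) with h | h
        · rw [max_eq_right (by linarith), max_eq_left (by linarith)]; ring
        · rw [max_eq_left (by linarith), max_eq_right (by linarith)]; ring
      have : q i - (δ * q i + max (q i - t i) 0) + (δ * q i + max (t i - q i) 0)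
          = t i := by rw [show q i - (δ * q i + max (q i - t i) 0) + (δ * q i + max (t i - q i) 0) = q i + (max (t i - q i) 0 - max (q i - t i) 0) by ring, hkey]; ring
      rw [this]; exact ht0 i
    · have h1 : ∀ i, max (q i - t i) 0 = ((q i - t i) + |t i - q i|) / 2 := by
        intro i
        rw [abs_sub_comm]
        rcases le_or_gt (t i) (q i) with h | h
        · rw [max_eq_left (by linarith), abs_of_nonneg (by linarith)]; ring
        · rw [max_eq_right (by linarith), abs_of_neg (by linarith)]; ring
      simp only [h1]
      rw [Finset.sum_add_distrib, ← Finset.mul_sum, hq1]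
      rw [show (∑ i, (q i - t i + |t i - q i|) / 2) = ((∑ i, (q i - t i)) + ∑ i, |t i - q i|) / 2 by rw [← Finset.sum_add_distrib, Finset.sum_div]]
      rw [Finset.sum_sub_distrib, hq1, ht1]
      have : T = (1/2) * ∑ i, |t i - q i| := hT
      rw [hδ]; linarith
    · have h1 : ∀ i, max (t i - q i) 0 = ((t i - q i) + |t i - q i|) / 2 := by
        intro i
        rcases le_or_gt (q i) (t i) with h | h
        · rw [max_eq_left (by linarith), abs_of_nonneg (by linarith)]; ring
        · rw [max_eq_right (by linarith), abs_of_neg (by linarith)]; ring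
      simp only [h1]
      rw [Finset.sum_add_distrib, ← Finset.mul_sum, hq1]
      rw [show (∑ i, (t i - q i + |t i - q i|) / 2) = ((∑ i, (t i - q i)) + ∑ i, |t i - q i|) / 2 by rw [← Finset.sum_add_distrib, Finset.sum_div]]
      rw [Finset.sum_sub_distrib, hq1, ht1]
      have : T = (1/2) * ∑ i, |t i - q i| := hT
      rw [hδ]; linarith
    · funext i
      have hkey : max (t i - q i) 0 - max (q i - t i) 0 = t i - q i := by
        rcases le_or_gt (t i) (q i) with h | h
        · rw [max_eq_right (by linarith), max_eq_left (by linarith)]; ring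
        · rw [max_eq_left (by linarith), max_eq_right (by linarith)]; ring
      have : q i - (δ * q i + max (q i - t i) 0) + (δ * q i + max (t i - q i) 0)
          = q i + (max (t i - q i) 0 - max (q i - t i) 0) := by ring
      rw [this, hkey]; ring
end

section
/- The critical message-deferral rate equals the total variation distance to the uniform profile: for φ ∈ [0,1), there exists a feasible pair (s,r) whose apparent profile equals the uniform profile u (i.e., q − s + r = u) if and only if φ ≥ TV(u‖q). Moreover TV(u‖q) < 1, so such a rate always exists in [0,1). -/
open Finset

theorem sum_posPart_eq_sum_negPart {ι α : Type*} [AddCommGroup α] [Lattice α]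
    [AddLeftMono α] {s : Finset ι} {d : ι → α} (h : ∑ i ∈ s, d i = 0) :
    ∑ i ∈ s, (d i)⁺ = ∑ i ∈ s, (d i)⁻ := by
  rw [← sub_eq_zero, ← sum_sub_distrib]
  simpa only [posPart_sub_negPart] using h

theorem tvDist_eq_sum_negPart {n : ℕ} {p q : Fin n → ℝ} (h : ∑ i, p i = ∑ i, q i) :
    tvDist p q = ∑ i, (p i - q i)⁻ := by
  have hd : ∑ i, (p i - q i) = 0 := by rw [sum_sub_distrib, h, sub_self]
  simp only [tvDist, ← posPart_add_negPart, sum_add_distrib, sum_posPart_eq_sum_negPart hd]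
  ring

theorem tvDist_lt_one {n : ℕ} {p q : Fin n → ℝ} (hp0 : ∀ i, 0 ≤ p i) (hq0 : ∀ i, 0 ≤ q i)
    (hp1 : ∑ i, p i = 1) (hq1 : ∑ i, q i = 1) {j : Fin n} (hpj : 0 < p j) (hqj : 0 < q j) :
    tvDist p q < 1 := by
  rw [tvDist_eq_sum_negPart (hp1.trans hq1.symm), ← hq1]
  refine sum_lt_sum (fun i _ => ?_) ⟨j, mem_univ j, ?_⟩
  · exact sup_le (by linarith [hp0 i]) (hq0 i)
  · exact sup_lt_iff.2 ⟨by linarith, hqj⟩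

section Feasible

variable {n : ℕ} {q t : Fin n → ℝ} {φ : ℝ}

theorem Feasible.sum_negPart_le {s r : Fin n → ℝ} (hf : Feasible q φ s r)
    (ht : (fun i => q i - s i + r i) = t) : ∑ i, (t i - q i)⁻ ≤ φ := by
  obtain ⟨hs0, hr0, -, hs, -⟩ := hf
  rw [← hs, ← ht]
  exact sum_le_sum fun i _ => sup_le (by linarith [hr0 i]) (hs0 i)

theorem exists_feasible_of_sum_negPart_le (hn : n ≠ 0) (ht0 : ∀ i, 0 ≤ t i)
    (hsum : ∑ i, t i = ∑ i, q i) (hφ : ∑ i, (t i - q i)⁻ ≤ φ) :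
    ∃ s r, Feasible q φ s r ∧ (fun i => q i - s i + r i) = t := by
  set δ := (φ - ∑ i, (t i - q i)⁻) / n
  have hδ : 0 ≤ δ := div_nonneg (sub_nonneg.2 hφ) n.cast_nonneg
  have hδsum : ∑ _i : Fin n, δ = φ - ∑ i, (t i - q i)⁻ := by
    rw [sum_const, card_univ, Fintype.card_fin, nsmul_eq_mul]
    exact mul_div_cancel₀ _ (Nat.cast_ne_zero.2 hn)
  have hd : ∑ i, (t i - q i) = 0 := by rw [sum_sub_distrib, hsum, sub_self]
  have happ : ∀ i, q i - ((t i - q i)⁻ + δ) + ((t i - q i)⁺ + δ) = t i := fun i => by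
    linarith [posPart_sub_negPart (t i - q i)]
  refine ⟨fun i => (t i - q i)⁻ + δ, fun i => (t i - q i)⁺ + δ,
    ⟨fun i => by positivity, fun i => by positivity, fun i => (happ i).symm ▸ ht0 i, ?_, ?_⟩,
    funext happ⟩
  · rw [sum_add_distrib, hδsum]; ring
  · rw [sum_add_distrib, hδsum, sum_posPart_eq_sum_negPart hd]; ring

theorem exists_feasible_iff_sum_negPart_le (hn : n ≠ 0) (ht0 : ∀ i, 0 ≤ t i)
    (hsum : ∑ i, t i = ∑ i, q i) :
    (∃ s r, Feasible q φ s r ∧ (fun i => q i - s i + r i) = t) ↔ ∑ i, (t i - q i)⁻ ≤ φ :=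
  ⟨fun ⟨_, _, hf, ht⟩ => hf.sum_negPart_le ht, exists_feasible_of_sum_negPart_le hn ht0 hsum⟩

end Feasible

theorem uniform_attainable_iff_critical_rate_general {n : ℕ}
    (q : Fin n → ℝ) (hq0 : ∀ i, 0 ≤ q i) (hq1 : ∑ i, q i = 1) :
    (∀ φ : ℝ, 0 ≤ φ → φ < 1 →
      ((∃ s r, Feasible q φ s r ∧
          (fun i => q i - s i + r i) = fun _ => 1 / (n : ℝ)) ↔
        tvDist (fun _ => 1 / (n : ℝ)) q ≤ φ)) ∧
      tvDist (fun _ => 1 / (n : ℝ)) q < 1 := by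
  have hn : n ≠ 0 := by rintro rfl; simp at hq1
  have hu_pos : 0 < 1 / (n : ℝ) := by positivity
  have hu1 : ∑ _i : Fin n, 1 / (n : ℝ) = 1 := by simp [hn]
  obtain ⟨j, -, hqj⟩ := exists_lt_of_sum_lt (by simp [hq1] : ∑ _i : Fin n, (0 : ℝ) < ∑ i, q i)
  refine ⟨fun φ _ _ => ?_, tvDist_lt_one (fun _ => hu_pos.le) hq0 hu1 hq1 hu_pos hqj⟩
  rw [tvDist_eq_sum_negPart (hu1.trans hq1.symm)]
  exact exists_feasible_iff_sum_negPart_le hn (fun _ => hu_pos.le) (hu1.trans hq1.symm)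

theorem uniform_attainable_iff_critical_rate {n : ℕ} (hn : 2 ≤ n)
    (q : Fin n → ℝ) (hq0 : ∀ i, 0 ≤ q i) (hq1 : ∑ i, q i = 1) :
    (∀ φ : ℝ, 0 ≤ φ → φ < 1 →
      ((∃ s r, Feasible q φ s r ∧
          (fun i => q i - s i + r i) = fun _ => 1 / (n : ℝ)) ↔
        tvDist (fun _ => 1 / (n : ℝ)) q ≤ φ)) ∧
      tvDist (fun _ => 1 / (n : ℝ)) q < 1 :=
  uniform_attainable_iff_critical_rate_general q hq0 hq1
end

section
/- (Lemma 1(i)) There exists an index i ∈ {1,…,n} such that b_{i,n} = 0. -/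
/-!
Write `Q j = a₀ + ⋯ + a_{j-1}` (indices mod `n`). Since `∑ a = 0`, `Q` is `n`-periodic and so
attains a global minimum at some `i`. Started at `i`, every partial sum `Q (i + k) - Q i` of the
cyclically shifted tuple is nonnegative, so the truncation at `0` in the recursion for `b_{i,·}`
never bites: `b_{i,j}` is bounded by the `j`-th partial sum, and after a full period that sum is
`∑ a = 0`.
-/

/-- The buffer sequence `(b_{i,j})_{j≥0}` built from `a`, starting cyclically at
index `i`: `b_{i,0} = 0`, `b_{i,j+1} = max{b_{i,j} + a_{σ_i(j+1)}, 0}` where the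
cyclic index `σ_i(j+1)` is `i + j` in `Fin n`. -/
noncomputable def bseq {n : ℕ} [NeZero n] (a : Fin n → ℝ) (i : Fin n) : ℕ → ℝ
  | 0 => 0
  | j + 1 => max (bseq a i j + a (i + (Fin.ofNat n j))) 0

open Finset Fin.NatCast

theorem Function.Periodic.exists_forall_le_nat {α : Type*} [LinearOrder α] {f : ℕ → α} {c : ℕ}
    (hf : Function.Periodic f c) (hc : 0 < c) : ∃ m, ∀ k, f m ≤ f k := by
  obtain ⟨m, -, hm⟩ := (range c).exists_min_image f (nonempty_range_iff.mpr hc.ne')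
  exact ⟨m, fun k => hf.map_mod_nat k ▸ hm _ (mem_range.mpr (Nat.mod_lt k hc))⟩

section

variable {n : ℕ} [NeZero n]

theorem Fin.sum_range_add_eq_sum_univ {M : Type*} [AddCommMonoid M] (a : Fin n → M) (i : Fin n) :
    ∑ l ∈ range n, a (i + l) = ∑ m, a m := by
  rw [← Fin.sum_univ_eq_sum_range (fun l => a (i + l))]
  simp only [Fin.cast_val_eq_self]
  exact Equiv.sum_comp (Equiv.addLeft i) a

theorem Fin.exists_forall_sum_range_add_nonneg {M : Type*} [AddCommGroup M] [LinearOrder M]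
    [IsOrderedAddMonoid M] (a : Fin n → M) (ha : ∑ m, a m = 0) :
    ∃ i : Fin n, ∀ k, 0 ≤ ∑ l ∈ range k, a (i + l) := by
  set Q : ℕ → M := fun j => ∑ l ∈ range j, a l
  have hQ_add (j k : ℕ) : Q (j + k) = Q j + ∑ l ∈ range k, a ((j : Fin n) + l) := by
    simp only [Q, sum_range_add, Nat.cast_add]
  have hQ_periodic : Function.Periodic Q n := fun j => by
    rw [hQ_add, Fin.sum_range_add_eq_sum_univ, ha, add_zero]
  obtain ⟨m, hm⟩ := hQ_periodic.exists_forall_le_nat (Nat.pos_of_neZero n)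
  exact ⟨m, fun k => by simpa only [hQ_add, le_add_iff_nonneg_right] using hm (m + k)⟩

theorem bseq_nonneg (a : Fin n → ℝ) (i : Fin n) : ∀ j, 0 ≤ bseq a i j
  | 0 => le_rfl
  | _ + 1 => le_max_right _ _

theorem bseq_le_sum_range_of_forall_sum_range_nonneg (a : Fin n → ℝ) (i : Fin n)
    (h : ∀ k, 0 ≤ ∑ l ∈ range k, a (i + l)) (j : ℕ) :
    bseq a i j ≤ ∑ l ∈ range j, a (i + l) := by
  induction j with
  | zero => simp [bseq]
  | succ j ih =>
    rw [sum_range_succ]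
    exact max_le (add_le_add_left ih _) ((h (j + 1)).trans_eq (sum_range_succ _ _))

end

theorem exists_start_index_bseq_eq_zero_general {n : ℕ} [NeZero n]
    (a : Fin n → ℝ) (ha : ∑ m, a m = 0) :
    ∃ i : Fin n, bseq a i n = 0 := by
  obtain ⟨i, hi⟩ := Fin.exists_forall_sum_range_add_nonneg a ha
  refine ⟨i, le_antisymm ?_ (bseq_nonneg a i n)⟩
  calc bseq a i n ≤ ∑ l ∈ range n, a (i + l) :=
        bseq_le_sum_range_of_forall_sum_range_nonneg a i hi n
    _ = 0 := by rw [Fin.sum_range_add_eq_sum_univ, ha]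

theorem exists_start_index_bseq_eq_zero {n : ℕ} [NeZero n] (hn : 2 ≤ n)
    (a : Fin n → ℝ) (ha : ∑ m, a m = 0) :
    ∃ i : Fin n, bseq a i n = 0 :=
  exists_start_index_bseq_eq_zero_general a ha
end

section
/- (Normalization of the departure probabilities: every stored message leaves the buffer within the cycle) For every k ∈ {1,…,n} with s'_k > 0, one has Σ over j ∈ {k+1,…,n} with r'_j > 0 of (r'_j / b_{j−1}) · Π over l ∈ ω(j,k) of (1 − r'_l / b_{l−1}) = 1, where ω(j,k) = {l : r'_l > 0, k < l < j}. (Note that b_{j−1} > 0 automatically whenever r'_j > 0, so all the quotients are well defined.) -/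
/-!
Write `f j = r'_j / b_{j-1}` and let `T` be the set of slots in `(k, n]` with `r'_j > 0`.
The sum is `∑_{j ∈ T} f j ∏_{l ∈ T, l < j} (1 - f l)`, which telescopes to
`1 - ∏_{l ∈ T} (1 - f l)`. Since `b_k > 0 = b_n` and the buffer cannot decrease without a
departure, `T` is nonempty; after its last slot `J` the buffer never decreases again, so `b_J = 0`,
i.e. the departure at `J` empties the buffer: `f J = 1`, and the product vanishes.
-/

/-- Buffer content `b_j = ∑_{m=1}^{j} (s'_m − r'_m)`, i.e. `b_0 = 0` and
`b_j = b_{j−1} + s'_j − r'_j`. -/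
noncomputable def buf (s r : ℕ → ℝ) (j : ℕ) : ℝ :=
  ∑ m ∈ Finset.Icc 1 j, (s m - r m)

open Finset

section Buffer

variable {s r : ℕ → ℝ}

@[simp]
lemma buf_zero : buf s r 0 = 0 := by
  simp [buf]

lemma buf_eq_buf_sub_one_add (s r : ℕ → ℝ) {j : ℕ} (hj : 1 ≤ j) :
    buf s r j = buf s r (j - 1) + (s j - r j) := by
  obtain ⟨i, rfl⟩ : ∃ i, j = i + 1 := ⟨j - 1, by omega⟩
  simp only [buf, add_tsub_cancel_right]
  rw [sum_Icc_succ_top (by omega)]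

lemma buf_sub_buf (s r : ℕ → ℝ) {a b : ℕ} (hab : a ≤ b) :
    buf s r b - buf s r a = ∑ m ∈ Ioc a b, (s m - r m) := by
  have hIoc (j : ℕ) : Icc 1 j = Ioc 0 j := Icc_add_one_left_eq_Ioc 0 j
  rw [buf, buf, hIoc, hIoc, ← sum_Ioc_consecutive _ (Nat.zero_le a) hab, add_sub_cancel_left]

lemma buf_le_buf_of_forall_le {a b : ℕ} (hab : a ≤ b) (h : ∀ m ∈ Ioc a b, r m ≤ s m) :
    buf s r a ≤ buf s r b :=
  sub_nonneg.mp <| buf_sub_buf s r hab ▸ sum_nonneg fun m hm => sub_nonneg.mpr (h m hm)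

lemma exists_pos_of_buf_pos_of_buf_eq_zero {k n : ℕ} (hkn : k ≤ n)
    (hs : ∀ m ∈ Ioc k n, 0 ≤ s m) (hk : 0 < buf s r k) (hn : buf s r n = 0) :
    ∃ m ∈ Ioc k n, 0 < r m := by
  by_contra! h
  have := buf_le_buf_of_forall_le hkn fun m hm => (h m hm).trans (hs m hm)
  linarith

lemma buf_eq_zero_of_forall_le {j n : ℕ} (hjn : j ≤ n) (h : ∀ m ∈ Ioc j n, r m ≤ s m)
    (hj : 0 ≤ buf s r j) (hn : buf s r n = 0) : buf s r j = 0 :=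
  le_antisymm (hn ▸ buf_le_buf_of_forall_le hjn h) hj

lemma div_buf_sub_one_eq_one {j : ℕ} (hj : 1 ≤ j) (hsj : s j = 0) (hrj : 0 < r j)
    (hbuf : buf s r j = 0) : r j / buf s r (j - 1) = 1 := by
  rw [buf_eq_buf_sub_one_add s r hj, hsj] at hbuf
  rw [show buf s r (j - 1) = r j by linarith, div_self hrj.ne']

end Buffer

lemma Finset.filter_Ioo_eq_filter_filter_Ioc {α : Type*} [LinearOrder α] [LocallyFiniteOrder α]
    {a b c : α} (hbc : b ≤ c) (p : α → Prop) [DecidablePred p] :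
    (Ioo a b).filter p = ((Ioc a c).filter p).filter (· < b) := by
  ext x
  simp only [mem_filter, mem_Ioo, mem_Ioc]
  constructor
  · rintro ⟨⟨hax, hxb⟩, hp⟩
    exact ⟨⟨⟨hax, hxb.le.trans hbc⟩, hp⟩, hxb⟩
  · rintro ⟨⟨⟨hax, -⟩, hp⟩, hxb⟩
    exact ⟨⟨hax, hxb⟩, hp⟩

theorem departure_probabilities_sum_to_one_general (n : ℕ) (s r : ℕ → ℝ)
    (hs : ∀ j ∈ Finset.Icc 1 n, 0 ≤ s j)
    (horth : ∀ j ∈ Finset.Icc 1 n, s j * r j = 0)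
    (hbuf : ∀ j ∈ Finset.Icc 1 n, 0 ≤ buf s r j) (hbufn : buf s r n = 0)
    (k : ℕ) (hk : k ∈ Finset.Icc 1 n) (hsk : 0 < s k) :
    ∑ j ∈ (Finset.Ioc k n).filter (fun j => 0 < r j),
      (r j / buf s r (j - 1)) *
        ∏ l ∈ (Finset.Ioo k j).filter (fun l => 0 < r l),
          (1 - r l / buf s r (l - 1)) = 1 := by
  obtain ⟨hk1, hkn⟩ := mem_Icc.mp hk
  have hs' (a : ℕ) : ∀ m ∈ Ioc a n, 0 ≤ s m := fun m hm => hs m (by simp at hm ⊢; omega)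
  have hbuf' (j : ℕ) (hj : j ≤ n) : 0 ≤ buf s r j :=
    j.eq_zero_or_pos.elim (fun h => h ▸ buf_zero.ge) fun h => hbuf j (mem_Icc.mpr ⟨h, hj⟩)
  have hrk : r k = 0 := (mul_eq_zero.mp (horth k hk)).resolve_left hsk.ne'
  have hbk : 0 < buf s r k := by
    rw [buf_eq_buf_sub_one_add s r hk1, hrk]
    linarith [hbuf' (k - 1) (by omega)]
  set T := (Ioc k n).filter (fun j => 0 < r j)
  have hT : T.Nonempty := by
    obtain ⟨m, hm, hrm⟩ := exists_pos_of_buf_pos_of_buf_eq_zero hkn (hs' k) hbk hbufn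
    exact ⟨m, mem_filter.mpr ⟨hm, hrm⟩⟩
  obtain ⟨hJ, hrJ⟩ := mem_filter.mp (T.max'_mem hT)
  set J := T.max' hT
  have hJ' : J ∈ Icc 1 n := by simp at hJ ⊢; omega
  have hlast : ∀ m ∈ Ioc J n, r m ≤ 0 := fun m hm => not_lt.mp fun hrm =>
    (mem_Ioc.mp hm).1.not_ge <|
      T.le_max' m (mem_filter.mpr ⟨Ioc_subset_Ioc_left (mem_Ioc.mp hJ).1.le hm, hrm⟩)
  have hbJ : buf s r J = 0 := buf_eq_zero_of_forall_le (mem_Icc.mp hJ').2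
    (fun m hm => (hlast m hm).trans (hs' J m hm)) (hbuf' J (mem_Icc.mp hJ').2) hbufn
  have hfJ : r J / buf s r (J - 1) = 1 := div_buf_sub_one_eq_one (mem_Icc.mp hJ').1
    ((mul_eq_zero.mp (horth J hJ')).resolve_right hrJ.ne') hrJ hbJ
  have htelescope := prod_one_sub_ordered T fun j => r j / buf s r (j - 1)
  rw [prod_eq_zero (T.max'_mem hT) (by rw [hfJ, sub_self])] at htelescope
  rw [sum_congr rfl fun j hj => by
    rw [filter_Ioo_eq_filter_filter_Ioc (mem_Ioc.mp (mem_filter.mp hj).1).2]]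
  linarith

theorem departure_probabilities_sum_to_one (n : ℕ) (hn : 2 ≤ n) (s r : ℕ → ℝ)
    (hs : ∀ j ∈ Finset.Icc 1 n, 0 ≤ s j) (hr : ∀ j ∈ Finset.Icc 1 n, 0 ≤ r j)
    (horth : ∀ j ∈ Finset.Icc 1 n, s j * r j = 0)
    (hbuf : ∀ j ∈ Finset.Icc 1 n, 0 ≤ buf s r j) (hbufn : buf s r n = 0)
    (k : ℕ) (hk : k ∈ Finset.Icc 1 n) (hsk : 0 < s k) :
    ∑ j ∈ (Finset.Ioc k n).filter (fun j => 0 < r j),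
      (r j / buf s r (j - 1)) *
        ∏ l ∈ (Finset.Ioo k j).filter (fun l => 0 < r l),
          (1 - r l / buf s r (l - 1)) = 1 :=
  departure_probabilities_sum_to_one_general n s r hs horth hbuf hbufn k hk hsk
end
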